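/- arXiv:1107.4506 — 4 statements merged into one kernel-verified Lean document; each statement's English description precedes it below -/
import Mathlib

section
/- Change-of-measure lower bound: Let θ = (ν₁,…,ν_K) and θ̃ = (ν̃₁,…,ν̃_K) be two K-tuples of probability measures on [0,1] with ν_k = ν̃_k for a fixed arm k. Suppose η ∈ (0,1) and let A_t be the event that ∏_{ℓ≠k} (dν̃_ℓ/dν_ℓ)(X_{ℓ,s}) ≥ η for all s = 1,…,t. Then for any event B that is measurable with respect to (X_{ℓ,s})_{ℓ≠k, s≤t} and (X_{k,s})_{s≤N}, one has P_{θ̃}(A_t ∩ B) ≥ η^t · P_θ(A_t ∩ B). -/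
open MeasureTheory ENNReal Finset

private lemma lintegral_pi_prod {n : ℕ} {E : Fin n → Type*} [∀ i, MeasurableSpace (E i)]
    (μ : ∀ i, Measure (E i)) [∀ i, SigmaFinite (μ i)]
    (f : ∀ i, E i → ℝ≥0∞) (hf : ∀ i, Measurable (f i)) :
    ∫⁻ x, ∏ i, f i (x i) ∂Measure.pi μ = ∏ i, ∫⁻ x, f i x ∂μ i := by
  induction n with
  | zero => rw [Measure.pi_of_empty]; simp
  | succ n ih =>
    have h := measurePreserving_piFinSuccAbove μ 0
    have hmeas : Measurable fun y : E 0 × ∀ j : Fin n, E ((0 : Fin (n+1)).succAbove j) =>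
        f 0 y.1 * ∏ j, f ((0 : Fin (n+1)).succAbove j) (y.2 j) :=
      ((hf 0).comp measurable_fst).mul
        (Finset.measurable_prod _ fun j _ =>
          (hf _).comp ((measurable_pi_apply j).comp measurable_snd))
    calc ∫⁻ x, ∏ i, f i (x i) ∂Measure.pi μ
        = ∫⁻ x, f 0 x.1 * ∏ j, f ((0 : Fin (n+1)).succAbove j) (x.2 j)
            ∂((μ 0).prod (Measure.pi fun j => μ ((0 : Fin (n+1)).succAbove j))) := by
          rw [← h.lintegral_comp hmeas]
          refine lintegral_congr fun x => ?_
          simp only [MeasurableEquiv.piFinSuccAbove_apply]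
          exact Fin.prod_univ_succAbove (fun i => f i (x i)) 0
      _ = (∫⁻ x, f 0 x ∂μ 0) *
            ∏ j, ∫⁻ x, f ((0 : Fin (n+1)).succAbove j) x ∂μ ((0 : Fin (n+1)).succAbove j) := by
          rw [lintegral_prod_mul (f := f 0)
            (g := fun y : ∀ j : Fin n, E ((0 : Fin (n+1)).succAbove j) =>
              ∏ j, f ((0 : Fin (n+1)).succAbove j) (y j)) (hf 0).aemeasurable
            (Finset.measurable_prod _ fun j _ => (hf _).comp (measurable_pi_apply j)).aemeasurable,
            ih (fun j => μ ((0 : Fin (n+1)).succAbove j)) (fun j => f _) (fun j => hf _)]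
      _ = ∏ i, ∫⁻ x, f i x ∂μ i :=
          (Fin.prod_univ_succAbove (fun i => ∫⁻ x, f i x ∂μ i) 0).symm

private lemma pi_withDensity' {n : ℕ} {E : Fin n → Type*} [∀ i, MeasurableSpace (E i)]
    (μ : ∀ i, Measure (E i)) [∀ i, SigmaFinite (μ i)]
    (f : ∀ i, E i → ℝ≥0∞) (hf : ∀ i, Measurable (f i))
    [∀ i, SigmaFinite ((μ i).withDensity (f i))] :
    Measure.pi (fun i => (μ i).withDensity (f i)) =
      (Measure.pi μ).withDensity (fun x => ∏ i, f i (x i)) := by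
  refine Measure.pi_eq fun s hs => ?_
  rw [withDensity_apply _ (MeasurableSet.univ_pi hs),
    ← lintegral_indicator (MeasurableSet.univ_pi hs)]
  have key : ∀ x : ∀ i, E i, (Set.univ.pi s).indicator (fun x => ∏ i, f i (x i)) x
      = ∏ i, (s i).indicator (f i) (x i) := by
    intro x
    by_cases hx : x ∈ Set.univ.pi s
    · rw [Set.indicator_of_mem hx]
      exact Finset.prod_congr rfl fun i _ =>
        (Set.indicator_of_mem (hx i (Set.mem_univ i)) _).symm
    · rw [Set.indicator_of_notMem hx]
      rw [Set.mem_univ_pi, not_forall] at hx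
      obtain ⟨i, hi⟩ := hx
      symm
      refine Finset.prod_eq_zero (Finset.mem_univ i) ?_
      exact Set.indicator_of_notMem hi _
  simp_rw [key]
  rw [lintegral_pi_prod μ _ (fun i => (hf i).indicator (hs i))]
  exact Finset.prod_congr rfl fun i _ => by
    rw [lintegral_indicator (hs i), withDensity_apply _ (hs i)]

private lemma pi_mono'' {ι : Type*} [Fintype ι] {E : ι → Type*} [∀ i, MeasurableSpace (E i)]
    {μ ν : ∀ i, Measure (E i)} (h : ∀ i, μ i ≤ ν i) : Measure.pi μ ≤ Measure.pi ν := by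
  refine Measure.le_iff.mpr fun s hs => ?_
  rw [Measure.pi_def, Measure.pi_def, toMeasure_apply _ _ hs, toMeasure_apply _ _ hs]
  have : (OuterMeasure.pi fun i => (μ i).toOuterMeasure)
      ≤ OuterMeasure.pi fun i => (ν i).toOuterMeasure := by
    refine OuterMeasure.le_boundedBy.mpr fun u => (OuterMeasure.boundedBy_le u).trans ?_
    simp only [piPremeasure]
    exact Finset.prod_le_prod' fun i _ => Measure.le_iff'.1 (h i) _
  exact this s

/-- Change-of-measure lower bound: with `ν k = ν' k` for a fixed arm `k`,
`A_t = {∏_{ℓ≠k} (dν'ℓ/dνℓ)(X ℓ s) ≥ η for all s < t}`, and `B` any event depending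
only on `(X ℓ s)_{ℓ≠k, s<t}` and `(X k s)_{s<N}`, one has
`P_{θ'}(A_t ∩ B) ≥ η^t · P_θ(A_t ∩ B)`. -/
theorem stmt7 (K : ℕ) (hK : 2 ≤ K) (ν ν' : Fin K → Measure ℝ)
    [∀ ℓ, IsProbabilityMeasure (ν ℓ)] [∀ ℓ, IsProbabilityMeasure (ν' ℓ)]
    (hsupp : ∀ ℓ, (ν ℓ) (Set.Icc (0 : ℝ) 1)ᶜ = 0)
    (hsupp' : ∀ ℓ, (ν' ℓ) (Set.Icc (0 : ℝ) 1)ᶜ = 0)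
    (k : Fin K) (hk : ν k = ν' k)
    (η : ℝ) (hη : η ∈ Set.Ioo (0 : ℝ) 1)
    (N t : ℕ) (ht : t ≤ N)
    (A : Set (Fin K → Fin N → ℝ))
    (hA : A = {ω | ∀ s : Fin N, (s : ℕ) < t →
      ENNReal.ofReal η ≤
        ∏ ℓ ∈ Finset.univ.erase k, (ν' ℓ).rnDeriv (ν ℓ) (ω ℓ s)})
    (B : Set (Fin K → Fin N → ℝ))
    (B' : Set (({ℓ : Fin K // ℓ ≠ k} → Fin t → ℝ) × (Fin N → ℝ)))
    (hB' : MeasurableSet B')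
    (hB : B = (fun ω : Fin K → Fin N → ℝ =>
      ((fun (ℓ : {ℓ : Fin K // ℓ ≠ k}) (s : Fin t) => ω ℓ (Fin.castLE ht s),
        fun s : Fin N => ω k s) :
        ({ℓ : Fin K // ℓ ≠ k} → Fin t → ℝ) × (Fin N → ℝ))) ⁻¹' B') :
    ENNReal.ofReal η ^ t *
        (Measure.pi fun ℓ => Measure.pi fun _ : Fin N => ν ℓ) (A ∩ B) ≤
      (Measure.pi fun ℓ => Measure.pi fun _ : Fin N => ν' ℓ) (A ∩ B) := by
  classical
  set f : Fin K → ℝ → ℝ≥0∞ := fun ℓ => (ν' ℓ).rnDeriv (ν ℓ) with hfdef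
  have hfm : ∀ ℓ, Measurable (f ℓ) := fun ℓ => Measure.measurable_rnDeriv _ _
  set d : Fin K → Fin N → ℝ → ℝ≥0∞ :=
    fun ℓ s => if ℓ ≠ k ∧ (s : ℕ) < t then f ℓ else 1 with hddef
  have hdm : ∀ ℓ s, Measurable (d ℓ s) := by
    intro ℓ s
    rw [hddef]
    dsimp only
    split_ifs
    · exact hfm ℓ
    · exact measurable_const
  -- measurability of A and B
  have hprod_meas : ∀ s : Fin N, Measurable fun ω : Fin K → Fin N → ℝ =>
      ∏ ℓ ∈ Finset.univ.erase k, f ℓ (ω ℓ s) := fun s =>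
    Finset.measurable_prod _ fun ℓ _ =>
      (hfm ℓ).comp ((measurable_pi_apply s).comp (measurable_pi_apply ℓ))
  have hAmeas : MeasurableSet A := by
    rw [hA]
    have : {ω : Fin K → Fin N → ℝ | ∀ s : Fin N, (s : ℕ) < t →
        ENNReal.ofReal η ≤ ∏ ℓ ∈ Finset.univ.erase k, (ν' ℓ).rnDeriv (ν ℓ) (ω ℓ s)}
        = ⋂ (s : Fin N) (_ : (s : ℕ) < t),
          {ω | ENNReal.ofReal η ≤ ∏ ℓ ∈ Finset.univ.erase k, f ℓ (ω ℓ s)} := by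
      ext ω
      simp [Set.mem_iInter, hfdef]
    rw [this]
    exact MeasurableSet.iInter fun s => MeasurableSet.iInter fun _ =>
      measurableSet_le measurable_const (hprod_meas s)
  have hprmeas : Measurable (fun ω : Fin K → Fin N → ℝ =>
      ((fun (ℓ : {ℓ : Fin K // ℓ ≠ k}) (s : Fin t) => ω ℓ (Fin.castLE ht s),
        fun s : Fin N => ω k s) :
        ({ℓ : Fin K // ℓ ≠ k} → Fin t → ℝ) × (Fin N → ℝ))) := by
    refine Measurable.prodMk ?_ ?_
    · exact measurable_pi_lambda _ fun ℓ => measurable_pi_lambda _ fun s =>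
        (measurable_pi_apply _).comp (measurable_pi_apply _)
    · exact measurable_pi_lambda _ fun s =>
        (measurable_pi_apply _).comp (measurable_pi_apply _)
  have hBmeas : MeasurableSet B := by
    rw [hB]; exact hprmeas hB'
  have hABmeas : MeasurableSet (A ∩ B) := hAmeas.inter hBmeas
  -- sigma-finiteness of the with-density measures
  have hfin : ∀ ℓ, ∀ s : Fin N, SigmaFinite ((ν ℓ).withDensity (d ℓ s)) := by
    intro ℓ s
    rw [hddef]; dsimp only
    split_ifs with h
    · have hle : (ν ℓ).withDensity (f ℓ) ≤ ν' ℓ := Measure.withDensity_rnDeriv_le _ _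
      have : IsFiniteMeasure ((ν ℓ).withDensity (f ℓ)) := isFiniteMeasure_of_le _ hle
      infer_instance
    · rw [withDensity_one]; infer_instance
  set G : (Fin K → Fin N → ℝ) → ℝ≥0∞ :=
    fun ω => ∏ ℓ, ∏ s : Fin N, d ℓ s (ω ℓ s) with hG
  have hGm : Measurable G := Finset.measurable_prod _ fun ℓ _ =>
    Finset.measurable_prod _ fun s _ =>
      (hdm ℓ s).comp ((measurable_pi_apply s).comp (measurable_pi_apply ℓ))
  -- inner factorization
  have hinner : ∀ ℓ, Measure.pi (fun s : Fin N => (ν ℓ).withDensity (d ℓ s))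
      = (Measure.pi fun _ : Fin N => ν ℓ).withDensity (fun y => ∏ s, d ℓ s (y s)) := by
    intro ℓ
    haveI := hfin ℓ
    exact pi_withDensity' _ _ (hdm ℓ)
  have houter : Measure.pi (fun ℓ => Measure.pi fun s : Fin N => (ν ℓ).withDensity (d ℓ s))
      = (Measure.pi fun ℓ => Measure.pi fun _ : Fin N => ν ℓ).withDensity G := by
    haveI : ∀ ℓ, SigmaFinite ((Measure.pi fun _ : Fin N => ν ℓ).withDensity
        (fun y => ∏ s, d ℓ s (y s))) := by
      intro ℓ; rw [← hinner ℓ]; haveI := hfin ℓ; infer_instance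
    have h1 : (Measure.pi fun ℓ => Measure.pi fun s : Fin N => (ν ℓ).withDensity (d ℓ s))
        = Measure.pi fun ℓ => (Measure.pi fun _ : Fin N => ν ℓ).withDensity
            (fun y => ∏ s, d ℓ s (y s)) := by
      congr 1
      funext ℓ
      exact hinner ℓ
    rw [h1]
    exact pi_withDensity' _ _ (fun ℓ => Finset.measurable_prod _ fun s _ =>
      (hdm ℓ s).comp (measurable_pi_apply s))
  -- comparison with the modified product measure
  set m2 : Fin K → Fin N → Measure ℝ :=
    fun ℓ s => if ℓ ≠ k ∧ (s : ℕ) < t then ν' ℓ else ν ℓ with hm2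
  have hle2 : Measure.pi (fun ℓ => Measure.pi fun s : Fin N => (ν ℓ).withDensity (d ℓ s))
      ≤ Measure.pi (fun ℓ => Measure.pi fun s : Fin N => m2 ℓ s) := by
    refine pi_mono'' fun ℓ => pi_mono'' fun s => ?_
    rw [hddef, hm2]; dsimp only
    split_ifs with h
    · exact Measure.withDensity_rnDeriv_le _ _
    · rw [withDensity_one]
  -- the coordinate-forgetting map
  set φ : Fin K → Fin N → ℝ → ℝ :=
    fun ℓ s x => if ℓ = k ∨ (s : ℕ) < t then x else 0 with hφ
  set ρ : Fin K → Fin N → Measure ℝ :=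
    fun ℓ s => if ℓ = k ∨ (s : ℕ) < t then ν' ℓ else Measure.dirac 0 with hρ
  haveI hρfin : ∀ ℓ, ∀ s : Fin N, SigmaFinite (ρ ℓ s) := by
    intro ℓ s; rw [hρ]; dsimp only; split_ifs <;> infer_instance
  have hmp1 : ∀ ℓ, ∀ s : Fin N, MeasurePreserving (φ ℓ s) (m2 ℓ s) (ρ ℓ s) := by
    intro ℓ s
    rw [hφ, hρ, hm2]; dsimp only
    by_cases h : ℓ = k ∨ (s : ℕ) < t
    · rw [if_pos h]
      have hid : (fun x : ℝ => if ℓ = k ∨ (s : ℕ) < t then x else 0) = id := by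
        funext x; rw [if_pos h]; rfl
      rw [hid]
      by_cases h2 : ℓ ≠ k ∧ (s : ℕ) < t
      · rw [if_pos h2]; exact MeasurePreserving.id _
      · rw [if_neg h2]
        have hℓk : ℓ = k := by
          rcases h with h | h
          · exact h
          · by_contra hne; exact h2 ⟨hne, h⟩
        subst hℓk
        rw [hk]
        exact MeasurePreserving.id _
    · rw [if_neg h]
      have h2 : ¬(ℓ ≠ k ∧ (s : ℕ) < t) := by
        rintro ⟨-, h2'⟩; exact h (Or.inr h2')
      rw [if_neg h2]
      have hconst : (fun x : ℝ => if ℓ = k ∨ (s : ℕ) < t then x else 0)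
          = fun _ => (0 : ℝ) := by
        funext x; rw [if_neg h]
      rw [hconst]
      refine ⟨measurable_const, ?_⟩
      rw [Measure.map_const, measure_univ, one_smul]
  have hmp2 : ∀ ℓ, ∀ s : Fin N, MeasurePreserving (φ ℓ s) (ν' ℓ) (ρ ℓ s) := by
    intro ℓ s
    rw [hφ, hρ]; dsimp only
    by_cases h : ℓ = k ∨ (s : ℕ) < t
    · rw [if_pos h]
      have hid : (fun x : ℝ => if ℓ = k ∨ (s : ℕ) < t then x else 0) = id := by
        funext x; rw [if_pos h]; rfl
      rw [hid]
      exact MeasurePreserving.id _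
    · rw [if_neg h]
      have hconst : (fun x : ℝ => if ℓ = k ∨ (s : ℕ) < t then x else 0)
          = fun _ => (0 : ℝ) := by
        funext x; rw [if_neg h]
      rw [hconst]
      refine ⟨measurable_const, ?_⟩
      rw [Measure.map_const, measure_univ, one_smul]
  set T : (Fin K → Fin N → ℝ) → (Fin K → Fin N → ℝ) :=
    fun ω ℓ s => φ ℓ s (ω ℓ s) with hT
  have hT1 : MeasurePreserving T (Measure.pi fun ℓ => Measure.pi fun s : Fin N => m2 ℓ s)
      (Measure.pi fun ℓ => Measure.pi fun s : Fin N => ρ ℓ s) :=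
    measurePreserving_pi _ _ fun ℓ => measurePreserving_pi _ _ fun s => hmp1 ℓ s
  have hT2 : MeasurePreserving T (Measure.pi fun ℓ => Measure.pi fun _ : Fin N => ν' ℓ)
      (Measure.pi fun ℓ => Measure.pi fun s : Fin N => ρ ℓ s) :=
    measurePreserving_pi _ _ fun ℓ => measurePreserving_pi _ _ fun s => hmp2 ℓ s
  -- T-invariance of A and B
  have hApre : T ⁻¹' A = A := by
    rw [hT, hA]
    ext ω
    simp only [Set.mem_preimage, Set.mem_setOf_eq]
    refine forall_congr' fun s => ?_
    refine imp_congr_right fun hs => ?_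
    have hφeq : ∀ ℓ : Fin K, φ ℓ s (ω ℓ s) = ω ℓ s := fun ℓ => by
      rw [hφ]; dsimp only; rw [if_pos (Or.inr hs)]
    rw [show (∏ ℓ ∈ Finset.univ.erase k, (ν' ℓ).rnDeriv (ν ℓ) (φ ℓ s (ω ℓ s)))
        = ∏ ℓ ∈ Finset.univ.erase k, (ν' ℓ).rnDeriv (ν ℓ) (ω ℓ s) from
      Finset.prod_congr rfl fun ℓ _ => by rw [hφeq ℓ]]
  have hBpre : T ⁻¹' B = B := by
    rw [hT, hB, ← Set.preimage_comp]
    refine congrArg (· ⁻¹' B') (funext fun ω => ?_)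
    refine Prod.ext ?_ ?_
    · funext ℓ s
      show φ (ℓ : Fin K) (Fin.castLE ht s) (ω ℓ (Fin.castLE ht s)) = ω ℓ (Fin.castLE ht s)
      rw [hφ]; dsimp only
      rw [if_pos (Or.inr (by simpa using s.isLt))]
    · funext s
      show φ k s (ω k s) = ω k s
      rw [hφ]; dsimp only
      rw [if_pos (Or.inl rfl)]
  have h4 : (Measure.pi fun ℓ => Measure.pi fun s : Fin N => m2 ℓ s) (A ∩ B)
      = (Measure.pi fun ℓ => Measure.pi fun _ : Fin N => ν' ℓ) (A ∩ B) := by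
    have hpre : T ⁻¹' (A ∩ B) = A ∩ B := by rw [Set.preimage_inter, hApre, hBpre]
    have e1 := hT1.measure_preimage hABmeas.nullMeasurableSet
    have e2 := hT2.measure_preimage hABmeas.nullMeasurableSet
    rw [hpre] at e1 e2
    rw [e1, ← e2]
  -- cardinality of {s < t}
  have hcard : (Finset.univ.filter fun s : Fin N => (s : ℕ) < t).card = t := by
    have himg : (Finset.univ.filter fun s : Fin N => (s : ℕ) < t)
        = Finset.image (Fin.castLE ht) Finset.univ := by
      ext s
      simp only [Finset.mem_filter, Finset.mem_univ, true_and, Finset.mem_image]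
      constructor
      · intro hs
        refine ⟨⟨(s : ℕ), hs⟩, ?_⟩
        ext
        simp
      · rintro ⟨j, rfl⟩
        simpa using j.isLt
    rw [himg, Finset.card_image_of_injective _ (Fin.castLE_injective ht),
      Finset.card_univ, Fintype.card_fin]
  -- the pointwise lower bound on the density
  have hstep1 : ENNReal.ofReal η ^ t
      * (Measure.pi fun ℓ => Measure.pi fun _ : Fin N => ν ℓ) (A ∩ B)
      ≤ ((Measure.pi fun ℓ => Measure.pi fun _ : Fin N => ν ℓ).withDensity G) (A ∩ B) := by
    rw [withDensity_apply _ hABmeas, ← setLIntegral_const]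
    refine setLIntegral_mono hGm fun ω hω => ?_
    have hωA : ω ∈ A := hω.1
    rw [hA] at hωA
    have hrow : ∀ s : Fin N, (∏ ℓ, d ℓ s (ω ℓ s))
        = if (s : ℕ) < t then ∏ ℓ ∈ Finset.univ.erase k, f ℓ (ω ℓ s) else 1 := by
      intro s
      by_cases hs : (s : ℕ) < t
      · rw [if_pos hs, ← Finset.prod_erase_mul Finset.univ _ (Finset.mem_univ k)]
        have hdk : d k s (ω k s) = 1 := by rw [hddef]; simp
        rw [hdk, mul_one]
        refine Finset.prod_congr rfl fun ℓ hℓ => ?_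
        rw [hddef]; dsimp only
        rw [if_pos ⟨(Finset.mem_erase.mp hℓ).1, hs⟩]
      · rw [if_neg hs]
        refine Finset.prod_eq_one fun ℓ _ => ?_
        rw [hddef]; dsimp only
        rw [if_neg (by tauto)]
        rfl
    calc ENNReal.ofReal η ^ t
        = ∏ _s ∈ Finset.univ.filter (fun s : Fin N => (s : ℕ) < t), ENNReal.ofReal η := by
          rw [Finset.prod_const, hcard]
      _ ≤ ∏ s ∈ Finset.univ.filter (fun s : Fin N => (s : ℕ) < t),
            ∏ ℓ ∈ Finset.univ.erase k, f ℓ (ω ℓ s) := by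
          refine Finset.prod_le_prod' fun s hs => ?_
          exact hωA s (Finset.mem_filter.mp hs).2
      _ = ∏ s : Fin N, (if (s : ℕ) < t then ∏ ℓ ∈ Finset.univ.erase k, f ℓ (ω ℓ s) else 1) := by
          rw [Finset.prod_ite, Finset.prod_const_one, mul_one]
      _ = ∏ s : Fin N, ∏ ℓ, d ℓ s (ω ℓ s) :=
          Finset.prod_congr rfl fun s _ => (hrow s).symm
      _ = G ω := Finset.prod_comm
  calc ENNReal.ofReal η ^ t
      * (Measure.pi fun ℓ => Measure.pi fun _ : Fin N => ν ℓ) (A ∩ B)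
      ≤ ((Measure.pi fun ℓ => Measure.pi fun _ : Fin N => ν ℓ).withDensity G) (A ∩ B) := hstep1
    _ = (Measure.pi fun ℓ => Measure.pi fun s : Fin N => (ν ℓ).withDensity (d ℓ s)) (A ∩ B) := by
        rw [houter]
    _ ≤ (Measure.pi fun ℓ => Measure.pi fun s : Fin N => m2 ℓ s) (A ∩ B) :=
        Measure.le_iff'.1 hle2 _
    _ = (Measure.pi fun ℓ => Measure.pi fun _ : Fin N => ν' ℓ) (A ∩ B) := h4
end

section
/- (Deterministic core of Theorem 5 / GCL* analysis) Suppose the event ξ holds: for all arms k and all s ∈ {1,…,n}, s(X̂_{k,s} − μ_k)² < ((β+1)/2) log n. Consider the GCL* policy which, after pulling each arm once, at each round t plays I_t ∈ argmin_k T_k(t−1)·(μ* − X̂_{k,T_k(t−1)})₊². Then on ξ, for every suboptimal arm k ≠ k*, one has T_k(n) ≤ 1 + 2(β+1) log(n)/Δ_k². -/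
open Finset

set_option maxHeartbeats 1600000 in
/-- Deterministic core of the GCL* analysis: on the concentration event `ξ`, the
GCL* policy (pull each arm once, then play an arm minimizing
`T k (t-1) · (μ* - X̂_{k,T k (t-1)})₊²`) pulls every suboptimal arm `k` at most
`1 + 2(β+1) log n / Δ k²` times by time `n`. -/
theorem stmt13 (K : ℕ) (hK : 2 ≤ K) (n : ℕ) (hn : K ≤ n) (β : ℝ) (hβ : 0 < β)
    (μ : Fin K → ℝ) (kstar : Fin K) (hbest : ∀ k, k ≠ kstar → μ k < μ kstar)
    (emp : Fin K → ℕ → ℝ)  -- `emp k s` : empirical mean of arm `k` after `s` pulls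
    (I : ℕ → Fin K) (T : Fin K → ℕ → ℕ)
    (hT : ∀ k t, T k t = ((Finset.Icc 1 t).filter (fun s => I s = k)).card)
    -- each arm is pulled once during the first K rounds
    (hinit : ∀ j, T j K = 1)
    -- GCL* selection rule for K < t ≤ n
    (hgcl : ∀ t, K < t → t ≤ n → ∀ j,
      (T (I t) (t - 1) : ℝ) * (max (μ kstar - emp (I t) (T (I t) (t - 1))) 0) ^ 2 ≤
        (T j (t - 1) : ℝ) * (max (μ kstar - emp j (T j (t - 1))) 0) ^ 2)
    -- the concentration event ξ holds
    (hξ : ∀ k, ∀ s ∈ Finset.Icc 1 n,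
      (s : ℝ) * (emp k s - μ k) ^ 2 < ((β + 1) / 2) * Real.log n) :
    ∀ k, k ≠ kstar →
      (T k n : ℝ) ≤ 1 + 2 * (β + 1) * Real.log n / (μ kstar - μ k) ^ 2 := by

  intro k hk
  by_contra hcon
  push_neg at hcon
  have hΔ : 0 < μ kstar - μ k := sub_pos.mpr (hbest k hk)
  set Δ := μ kstar - μ k with hΔdef
  have hn2 : (2:ℝ) ≤ (n:ℝ) := by exact_mod_cast le_trans hK hn
  have hlogn : 0 < Real.log n := Real.log_pos (by linarith)
  set C := ((β + 1) / 2) * Real.log n with hC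
  have hCpos : 0 < C := mul_pos (by linarith) hlogn
  have hmono : ∀ j, Monotone (T j) := by
    intro j a b hab
    simp only [hT]
    exact card_le_card (filter_subset_filter _ (Icc_subset_Icc le_rfl hab))
  have hΔ2 : (0:ℝ) < Δ^2 := by positivity
  have hTkn : (1:ℝ) < T k n := by
    have h2 : 0 < 2*(β+1)*Real.log n / Δ^2 := by positivity
    linarith
  have hTkn2 : 2 ≤ T k n := by
    have : 1 < T k n := by exact_mod_cast hTkn
    omega
  set S := (Icc 1 n).filter (fun s => I s = k) with hS
  have hScard : T k n = S.card := hT k n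
  have hSne : S.Nonempty := card_pos.mp (by omega)
  set t := S.max' hSne with ht
  have htS : t ∈ S := S.max'_mem hSne
  have htIcc : t ∈ Icc 1 n := (mem_filter.mp htS).1
  have htn : t ≤ n := (mem_Icc.mp htIcc).2
  have ht1 : 1 ≤ t := (mem_Icc.mp htIcc).1
  have hIt : I t = k := (mem_filter.mp htS).2
  have hTkt : T k t = T k n := by
    rw [hT, hT]
    congr 1
    apply Finset.Subset.antisymm (filter_subset_filter _ (Icc_subset_Icc le_rfl htn))
    intro s hs
    have hsS : s ∈ S := hs
    have hst : s ≤ t := S.le_max' s hsS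
    simp only [mem_filter, mem_Icc] at hs ⊢
    exact ⟨⟨hs.1.1, hst⟩, hs.2⟩
  have hKt : K < t := by
    by_contra h
    push_neg at h
    have h1 := hmono k h
    have e1 := hinit k
    omega
  have hTkt1 : T k (t-1) = T k n - 1 := by
    rw [hT, hScard]
    have heq : (Icc 1 (t-1)).filter (fun s => I s = k) = S.erase t := by
      ext s
      simp only [mem_erase, hS, mem_filter, mem_Icc]
      constructor
      · rintro ⟨⟨h1, h2⟩, h3⟩
        exact ⟨by omega, ⟨⟨h1, by omega⟩, h3⟩⟩
      · rintro ⟨hne, ⟨⟨h1, h2⟩, h3⟩⟩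
        have hst : s ≤ t := S.le_max' s (by
          simp only [hS, mem_filter, mem_Icc]
          exact ⟨⟨h1, h2⟩, h3⟩)
        exact ⟨⟨h1, by omega⟩, h3⟩
    rw [heq, card_erase_of_mem htS]
  have hG := hgcl t hKt htn kstar
  rw [hIt] at hG
  set s1 := T k (t-1) with hs1
  set s2 := T kstar (t-1) with hs2
  have hKt1 : K ≤ t - 1 := by omega
  have hs2ge : 1 ≤ s2 := by
    have h1 := hmono kstar hKt1
    have e1 := hinit kstar
    omega
  have hs2le : s2 ≤ n := by
    have h := hT kstar (t-1)
    have h2 := card_filter_le (Icc 1 (t-1)) (fun s => I s = kstar)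
    rw [Nat.card_Icc] at h2
    omega
  have hs1ge : 1 ≤ s1 := by omega
  have hs1le : s1 ≤ n := by
    have h2 : S.card ≤ n := by
      rw [hS]
      have h3 := card_filter_le (Icc 1 n) (fun s => I s = k)
      rwa [Nat.card_Icc, Nat.add_sub_cancel] at h3
    omega
  have hξ1 := hξ k s1 (mem_Icc.mpr ⟨hs1ge, hs1le⟩)
  have hξ2 := hξ kstar s2 (mem_Icc.mpr ⟨hs2ge, hs2le⟩)
  clear_value s2 s1 t S C Δ
  have hs1real : (s1:ℝ) = (T k n : ℝ) - 1 := by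
    rw [hTkt1, Nat.cast_sub (by omega), Nat.cast_one]
  have hs1pos : (0:ℝ) < (s1:ℝ) := by
    exact_mod_cast Nat.lt_of_lt_of_le Nat.zero_lt_one hs1ge
  have step2 : 4*C < (s1:ℝ) * Δ^2 := by
    rw [hs1real]
    have h := (div_lt_iff₀ hΔ2).mp
      (by linarith : 2*(β+1)*Real.log n/Δ^2 < (T k n:ℝ) - 1)
    rw [hC]
    have hr : 4 * ((β + 1) / 2 * Real.log n) = 2*(β+1)*Real.log n := by ring
    linarith
  have key1 : 4 * (emp k s1 - μ k)^2 < Δ^2 := by nlinarith [hξ1, step2, hs1pos]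
  have key2 : Δ/2 < μ kstar - emp k s1 := by nlinarith [key1, hΔ, hΔdef]
  have hmax1 : Δ/2 < max (μ kstar - emp k s1) 0 :=
    lt_of_lt_of_le key2 (le_max_left _ _)
  have hmsq : Δ^2/4 < (max (μ kstar - emp k s1) 0)^2 := by nlinarith [hmax1, hΔ]
  have hLHS : C < (s1:ℝ) * (max (μ kstar - emp k s1) 0)^2 := by
    have h := mul_lt_mul_of_pos_left hmsq hs1pos
    linarith
  have hmaxsq : (max (μ kstar - emp kstar s2) 0)^2 ≤ (emp kstar s2 - μ kstar)^2 := by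
    rcases le_total (μ kstar - emp kstar s2) 0 with h|h
    · rw [max_eq_right h]
      nlinarith [sq_nonneg (emp kstar s2 - μ kstar)]
    · rw [max_eq_left h]
      nlinarith
  have hRHS : (s2:ℝ) * (max (μ kstar - emp kstar s2) 0)^2 < C := by
    have hs2nn : (0:ℝ) ≤ (s2:ℝ) := Nat.cast_nonneg _
    calc (s2:ℝ) * (max (μ kstar - emp kstar s2) 0)^2
        ≤ (s2:ℝ) * (emp kstar s2 - μ kstar)^2 :=
          mul_le_mul_of_nonneg_left hmaxsq hs2nn
      _ < C := hξ2
  linarith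
end

section
/- (Theorem 5) If μ* is constant over Θ (i.e., the value of the optimal mean is known), then for every β > 0 there exist C, C̃ > 0 such that for all θ ∈ Θ with Δ ≠ 0, all n ≥ 2, and all k ≠ k*, the GCL* policy satisfies P_θ(T_k(n) ≥ C log(n)/Δ_k²) ≤ C̃/n^β. Explicitly one may take C = 2(β+1) + 1 and C̃ = 2K. -/
/-!
On the event that, for every arm and every sample size `s ≤ n`, the empirical mean lies within
`√((β + 1) log n / (2 s))` of the true mean, the GCL* index `s (m - x)₊²` of the optimal arm stays
at most `(β + 1) log n / 2`, whereas the index of arm `k` exceeds this value once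
`s ≥ 2 (β + 1) log n / Δ_k²`. Looking at the last pull of arm `k` before `n` therefore gives
`T_k(n) < 2 (β + 1) log n / Δ_k² + 1` on that event. Hoeffding's inequality and a union bound over
the `K` arms and `n` sample sizes bound the probability of the complement by
`2 K n · n^(-(β + 1)) = 2 K / n^β`. The additional `log n / Δ_k²` in the threshold absorbs the `+ 1`
unless `log n < Δ_k² ≤ 1`, that is `n = 2`, where `T_k(2) ≤ 2` is below the threshold anyway.
-/

open MeasureTheory ProbabilityTheory Finset Real

def gclIndex (m : ℝ) (s : ℕ) (x : ℝ) : ℝ := s * max (m - x) 0 ^ 2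

theorem gclIndex_le_of_abs_sub_lt {m L x : ℝ} {s : ℕ} (hL : 0 ≤ L) (hs : 0 < s)
    (hx : |x - m| < √(L / (2 * s))) : gclIndex m s x ≤ L / 2 := by
  have hmax : max (m - x) 0 ≤ √(L / (2 * s)) :=
    max_le (by linarith [(abs_lt.1 hx).1]) (sqrt_nonneg _)
  calc gclIndex m s x ≤ s * √(L / (2 * s)) ^ 2 := by
        unfold gclIndex; gcongr
    _ = L / 2 := by rw [sq_sqrt (by positivity)]; field_simp

theorem lt_gclIndex_of_abs_sub_lt {m μ L x : ℝ} {s : ℕ} (hs : 0 < s) (hμ : μ < m)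
    (hsL : 2 * L / (m - μ) ^ 2 ≤ s) (hx : |x - μ| < √(L / (2 * s))) :
    L / 2 < gclIndex m s x := by
  have hs' : (0 : ℝ) < s := by exact_mod_cast hs
  have hΔ : 0 < m - μ := sub_pos.2 hμ
  have hradius : √(L / (2 * s)) ≤ (m - μ) / 2 := by
    rw [sqrt_le_left (by linarith), div_le_iff₀ (by positivity)]
    rw [div_le_iff₀ (by positivity)] at hsL
    nlinarith
  have hgap : (m - μ) / 2 < max (m - x) 0 :=
    lt_max_of_lt_left (by linarith [(abs_lt.1 hx).2])
  calc L / 2 ≤ s * ((m - μ) / 2) ^ 2 := by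
        rw [div_le_iff₀ (by positivity)] at hsL
        nlinarith
    _ < gclIndex m s x := by unfold gclIndex; gcongr

section Bandit

variable {ι : Type*} [DecidableEq ι] (I : ℕ → ι)

def pullCount (j : ι) (t : ℕ) : ℕ := #{s ∈ Icc 1 t | I s = j}

variable {I}

theorem pullCount_succ (j : ι) (t : ℕ) :
    pullCount I j (t + 1) = pullCount I j t + if I (t + 1) = j then 1 else 0 := by
  rw [pullCount, pullCount, ← insert_Icc_right_eq_Icc_add_one (Nat.le_add_left 1 t), filter_insert]
  split_ifs with h
  · rw [card_insert_of_notMem (by simp)]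
  · rfl

theorem pullCount_le_self (j : ι) (t : ℕ) : pullCount I j t ≤ t :=
  (card_filter_le _ _).trans (by simp)

theorem pullCount_mono (j : ι) : Monotone (pullCount I j) := fun _ _ h ↦
  card_le_card (filter_subset_filter _ (Icc_subset_Icc_right h))

theorem exists_lt_pullCount_succ_eq {j : ι} {n : ℕ} (hn : 0 < pullCount I j n) :
    ∃ t < n, I (t + 1) = j ∧ pullCount I j t + 1 = pullCount I j n := by
  induction n with
  | zero => simp [pullCount] at hn
  | succ n ih =>
    by_cases h : I (n + 1) = j
    · exact ⟨n, n.lt_succ_self, h, by simp [pullCount_succ, h]⟩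
    · have hn' : pullCount I j (n + 1) = pullCount I j n := by simp [pullCount_succ, h]
      obtain ⟨t, ht, hIt, hcount⟩ := ih (hn' ▸ hn)
      exact ⟨t, ht.trans n.lt_succ_self, hIt, hcount.trans hn'.symm⟩

theorem pullCount_lt_of_forall_abs_sub_lt {K n : ℕ} {m L : ℝ} {μ : ι → ℝ} {emp : ι → ℕ → ℝ}
    {k kstar : ι} (hinit : ∀ j, pullCount I j K = 1)
    (hgcl : ∀ t, K < t → ∀ j,
      gclIndex m (pullCount I (I t) (t - 1)) (emp (I t) (pullCount I (I t) (t - 1))) ≤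
        gclIndex m (pullCount I j (t - 1)) (emp j (pullCount I j (t - 1))))
    (hL : 0 < L) (hkstar : μ kstar = m) (hk : μ k < m)
    (hconc : ∀ j s, 1 ≤ s → s ≤ n → |emp j s - μ j| < √(L / (2 * s))) :
    (pullCount I k n : ℝ) < 2 * L / (m - μ k) ^ 2 + 1 := by
  by_contra! hcount
  have hB : 0 < 2 * L / (m - μ k) ^ 2 := by have := sub_pos.2 hk; positivity
  obtain ⟨t, htn, hIt, hlast⟩ := exists_lt_pullCount_succ_eq (I := I) (j := k) (n := n)
    (by exact_mod_cast (by linarith : (0 : ℝ) < pullCount I k n))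
  have hsB : 2 * L / (m - μ k) ^ 2 ≤ pullCount I k t := by
    rw [← hlast] at hcount; push_cast at hcount; linarith
  have hs0 : 0 < pullCount I k t := by exact_mod_cast hB.trans_le hsB
  have hKt : K ≤ t := by
    by_contra! htK
    have h1 := pullCount_mono (I := I) k (Nat.succ_le_of_lt htK)
    rw [hinit, pullCount_succ, if_pos hIt] at h1
    omega
  have hs1 : 0 < pullCount I kstar t := by
    have := pullCount_mono (I := I) kstar hKt
    rw [hinit] at this
    omega
  have hsn : ∀ j, pullCount I j t ≤ n := fun j ↦ (pullCount_le_self j t).trans htn.le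
  have hrule := hgcl (t + 1) (by omega) kstar
  simp only [Nat.add_sub_cancel, hIt] at hrule
  have hlower := lt_gclIndex_of_abs_sub_lt hs0 hk hsB (hconc k _ hs0 (hsn k))
  have hupper := gclIndex_le_of_abs_sub_lt hL.le hs1 (hkstar ▸ hconc kstar _ hs1 (hsn kstar))
  linarith

end Bandit

section Concentration

variable {Ω : Type*} [MeasurableSpace Ω] {P : Measure Ω} [IsProbabilityMeasure P]

theorem integral_mem_Icc_zero_one {f : Ω → ℝ} (hf : ∀ ω, f ω ∈ Set.Icc (0 : ℝ) 1) :
    ∫ ω, f ω ∂P ∈ Set.Icc (0 : ℝ) 1 :=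
  ⟨integral_nonneg fun ω ↦ (hf ω).1, (integral_mono_of_nonneg (ae_of_all _ fun ω ↦ (hf ω).1)
    (integrable_const 1) (ae_of_all _ fun ω ↦ (hf ω).2)).trans_eq (by simp)⟩

theorem measureReal_abs_mean_sub_ge_le_of_iIndepFun {ι : Type*} {Y : ι → Ω → ℝ} (hindep : iIndepFun Y P)
    (hmeas : ∀ i, AEMeasurable (Y i) P) (hrange : ∀ i, ∀ᵐ ω ∂P, Y i ω ∈ Set.Icc (0 : ℝ) 1)
    {ν : ℝ} (hmean : ∀ i, P[Y i] = ν) {s : Finset ι} (hs : s.Nonempty) {δ : ℝ} (hδ : 0 ≤ δ) :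
    P.real {ω | δ ≤ |1 / (#s : ℝ) * ∑ i ∈ s, Y i ω - ν|} ≤ 2 * exp (-2 * #s * δ ^ 2) := by
  have hsubG : ∀ i, HasSubgaussianMGF (fun ω ↦ Y i ω - ν) (1 / 4) P := fun i ↦ by
    convert hasSubgaussianMGF_of_mem_Icc (hmeas i) (hrange i) using 2 <;> norm_num [hmean i]
  have hs0 : (0 : ℝ) < #s := by exact_mod_cast hs.card_pos
  have hε : 0 ≤ #s * δ := by positivity
  have hexp : exp (-(#s * δ) ^ 2 / (2 * ∑ _i ∈ s, (1 / 4 : NNReal))) = exp (-2 * #s * δ ^ 2) := by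
    congr 1
    simp only [sum_const, nsmul_eq_mul, NNReal.coe_mul, NNReal.coe_natCast]
    field_simp
    norm_num
    ring
  have hupper := HasSubgaussianMGF.measure_sum_ge_le_of_iIndepFun
    (hindep.comp (fun _ x ↦ x - ν) fun _ ↦ by fun_prop) (s := s) (fun i _ ↦ hsubG i) hε
  have hlower := HasSubgaussianMGF.measure_sum_ge_le_of_iIndepFun
    (hindep.comp (fun _ x ↦ -(x - ν)) fun _ ↦ by fun_prop) (s := s) (fun i _ ↦ (hsubG i).neg) hε
  have hmean_sub : ∀ ω, 1 / (#s : ℝ) * ∑ i ∈ s, Y i ω - ν = (∑ i ∈ s, (Y i ω - ν)) / #s := by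
    intro ω
    rw [sum_sub_distrib, sum_const, nsmul_eq_mul]
    field_simp
  have hsub : {ω | δ ≤ |1 / (#s : ℝ) * ∑ i ∈ s, Y i ω - ν|} ⊆
      {ω | #s * δ ≤ ∑ i ∈ s, (Y i ω - ν)} ∪ {ω | #s * δ ≤ ∑ i ∈ s, -(Y i ω - ν)} := by
    intro ω hω
    replace hω : δ ≤ |(∑ i ∈ s, (Y i ω - ν)) / #s| := by rwa [← hmean_sub]
    rcases le_abs.1 hω with h | h
    · left
      change (#s : ℝ) * δ ≤ ∑ i ∈ s, (Y i ω - ν)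
      rw [le_div_iff₀ hs0] at h
      linarith
    · right
      change _ ≤ ∑ i ∈ s, -(Y i ω - ν)
      rw [← neg_div, le_div_iff₀ hs0, ← sum_neg_distrib] at h
      linarith
  calc P.real _ ≤ P.real _ := measureReal_mono hsub
    _ ≤ _ := measureReal_union_le _ _
    _ ≤ exp (-2 * #s * δ ^ 2) + exp (-2 * #s * δ ^ 2) := by
      rw [← hexp]
      exact add_le_add hupper hlower
    _ = _ := by ring

theorem measureReal_iUnion_abs_mean_sub_ge_le {ι : Type*} [Fintype ι] {X : ι → ℕ → Ω → ℝ}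
    (hindep : ∀ j, iIndepFun (X j) P) (hmeas : ∀ j t, AEMeasurable (X j t) P)
    (hrange : ∀ j t, ∀ᵐ ω ∂P, X j t ω ∈ Set.Icc (0 : ℝ) 1) {μ : ι → ℝ}
    (hmean : ∀ j t, P[X j t] = μ j) (n : ℕ) {L : ℝ} (hL : 0 ≤ L) :
    P.real (⋃ j, ⋃ s ∈ Icc 1 n,
        {ω | √(L / (2 * s)) ≤ |1 / (s : ℝ) * ∑ t ∈ Icc 1 s, X j t ω - μ j|}) ≤
      2 * Fintype.card ι * n * exp (-L) := by
  have hterm : ∀ j, ∀ s ∈ Icc 1 n, P.real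
      {ω | √(L / (2 * s)) ≤ |1 / (s : ℝ) * ∑ t ∈ Icc 1 s, X j t ω - μ j|} ≤ 2 * exp (-L) := by
    intro j s hs
    have hs1 : 1 ≤ s := (mem_Icc.1 hs).1
    have hcard : #(Icc 1 s) = s := by simp
    have := measureReal_abs_mean_sub_ge_le_of_iIndepFun (hindep j) (hmeas j) (hrange j) (hmean j)
      (nonempty_Icc.2 hs1) (sqrt_nonneg (L / (2 * s)))
    rw [hcard, sq_sqrt (by positivity)] at this
    convert this using 3
    field_simp
  calc _ ≤ ∑ j, P.real (⋃ s ∈ Icc 1 n,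
          {ω | √(L / (2 * s)) ≤ |1 / (s : ℝ) * ∑ t ∈ Icc 1 s, X j t ω - μ j|}) :=
        measureReal_iUnion_fintype_le _
    _ ≤ ∑ _j : ι, ∑ _s ∈ Icc 1 n, 2 * exp (-L) :=
        sum_le_sum fun j _ ↦ (measureReal_biUnion_finset_le _ _).trans (sum_le_sum (hterm j))
    _ = _ := by simp; ring

end Concentration

theorem lt_mul_log_div_sq_of_lt_of_le {n : ℕ} (hn : 2 ≤ n) {β Δ x : ℝ} (hβ : 0 < β)
    (hΔ0 : 0 < Δ) (hΔ1 : Δ ≤ 1) (hxn : x ≤ n) (hx : x < 2 * (β + 1) * log n / Δ ^ 2 + 1) :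
    x < (2 * (β + 1) + 1) * log n / Δ ^ 2 := by
  have hΔsq : 0 < Δ ^ 2 := by positivity
  rcases le_or_gt (Δ ^ 2) (log n) with hlog | hlog
  · have : 1 ≤ log n / Δ ^ 2 := (one_le_div hΔsq).2 hlog
    calc x < 2 * (β + 1) * log n / Δ ^ 2 + 1 := hx
      _ ≤ 2 * (β + 1) * log n / Δ ^ 2 + log n / Δ ^ 2 := by linarith
      _ = _ := by ring
  · -- then `log n < 1`, which forces `n = 2`
    have hsq1 : Δ ^ 2 ≤ 1 := by nlinarith
    have hn2 : n = 2 := by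
      have hlt : (n : ℝ) < 3 := by
        have := (log_lt_iff_lt_exp (by positivity)).1 (hlog.trans_le hsq1)
        linarith [exp_one_lt_d9]
      have : n < 3 := by exact_mod_cast hlt
      omega
    subst hn2
    have hlog2 := log_two_gt_d9
    calc x ≤ 2 := by exact_mod_cast hxn
      _ < (2 * (β + 1) + 1) * log (2 : ℕ) := by push_cast; nlinarith
      _ ≤ _ := le_div_self (by positivity) hΔsq hsq1

theorem mul_exp_neg_add_one_mul_log {x : ℝ} (hx : 0 < x) (β : ℝ) :
    x * exp (-((β + 1) * log x)) = (x ^ β)⁻¹ := by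
  rw [rpow_def_of_pos hx, ← exp_neg, add_mul, one_mul, neg_add, exp_add, exp_neg (log x),
    exp_log hx, mul_comm β]
  field_simp

theorem stmt14_general {Ω : Type*} [MeasurableSpace Ω] (P : Measure Ω) [IsProbabilityMeasure P]
    (K : ℕ) (β : ℝ) (hβ : 0 < β)
    (X : Fin K → ℕ → Ω → ℝ)
    (hXmeas : ∀ k s, Measurable (X k s))
    (hindep : iIndepFun
      (fun p : Fin K × ℕ => X p.1 p.2) P)
    (hrange : ∀ k s ω, X k s ω ∈ Set.Icc (0 : ℝ) 1)
    (μ : Fin K → ℝ) (hmean : ∀ k s, ∫ ω, X k s ω ∂P = μ k)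
    (m : ℝ)
    (kstar : Fin K) (hkstar : μ kstar = m)
    (hbest : ∀ k, k ≠ kstar → μ k < μ kstar)
    -- empirical means
    (emp : Fin K → ℕ → Ω → ℝ)
    (hemp : ∀ k s ω, emp k s ω = (1 / (s : ℝ)) * ∑ t ∈ Finset.Icc 1 s, X k t ω)
    -- the GCL* policy
    (I : ℕ → Ω → Fin K)
    (T : Fin K → ℕ → Ω → ℕ)
    (hT : ∀ k t ω, T k t ω = ((Finset.Icc 1 t).filter (fun s => I s ω = k)).card)
    -- each arm is pulled exactly once during the first K rounds
    (hinit : ∀ j ω, T j K ω = 1)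
    -- GCL* selection rule for t > K
    (hgcl : ∀ t ω, K < t → ∀ j,
      (T (I t ω) (t - 1) ω : ℝ) *
          (max (m - emp (I t ω) (T (I t ω) (t - 1) ω) ω) 0) ^ 2 ≤
        (T j (t - 1) ω : ℝ) * (max (m - emp j (T j (t - 1) ω) ω) 0) ^ 2) :
    ∀ n : ℕ, 2 ≤ n → ∀ k, k ≠ kstar →
      (P {ω | (2 * (β + 1) + 1) * Real.log n / (μ kstar - μ k) ^ 2 ≤ (T k n ω : ℝ)}).toReal ≤
        2 * K / (n : ℝ) ^ β := by
  intro n hn k hk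
  have hnpos : (0 : ℝ) < n := by positivity
  have hL : 0 < (β + 1) * log n := mul_pos (by linarith) (log_pos (by exact_mod_cast hn))
  have hT' : ∀ ω j t, T j t ω = pullCount (fun s ↦ I s ω) j t := fun ω j t ↦ hT j t ω
  have hΔ1 : μ kstar - μ k ≤ 1 := by
    have h0 := hmean k 1 ▸ integral_mem_Icc_zero_one (P := P) (hrange k 1)
    have h1 := hmean kstar 1 ▸ integral_mem_Icc_zero_one (P := P) (hrange kstar 1)
    linarith [h0.1, h1.2]
  have hsub : {ω | (2 * (β + 1) + 1) * log n / (μ kstar - μ k) ^ 2 ≤ (T k n ω : ℝ)} ⊆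
      ⋃ j, ⋃ s ∈ Icc 1 n, {ω | √((β + 1) * log n / (2 * s)) ≤
        |1 / (s : ℝ) * ∑ t ∈ Icc 1 s, X j t ω - μ j|} := by
    intro ω hω
    by_contra hgood
    simp only [Set.mem_iUnion, Set.mem_ofPred_eq, not_exists, not_le, mem_Icc] at hgood
    have hcount := pullCount_lt_of_forall_abs_sub_lt (I := fun s ↦ I s ω) (K := K)
      (emp := fun j s ↦ emp j s ω) (k := k) (kstar := kstar)
      (fun j ↦ by simpa only [hT'] using hinit j ω)
      (fun t ht j ↦ by simpa only [gclIndex, hT'] using hgcl t ω ht j) hL hkstar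
      (hkstar ▸ hbest k hk) (fun j s hs1 hsn ↦ by simpa only [hemp] using hgood j s ⟨hs1, hsn⟩)
    rw [← hkstar, ← hT'] at hcount
    exact (lt_mul_log_div_sq_of_lt_of_le hn hβ (sub_pos.2 (hbest k hk)) hΔ1
      (by exact_mod_cast (hT k n ω).trans_le (pullCount_le_self (I := fun s ↦ I s ω) k n))
      (by rwa [← mul_assoc] at hcount)).not_ge hω
  calc P.real _ ≤ P.real _ := measureReal_mono hsub
    _ ≤ 2 * Fintype.card (Fin K) * n * exp (-((β + 1) * log n)) :=
      measureReal_iUnion_abs_mean_sub_ge_le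
        (fun j ↦ hindep.precomp (g := fun t : ℕ ↦ (j, t)) fun _ _ h ↦ (Prod.ext_iff.1 h).2)
        (fun j t ↦ (hXmeas j t).aemeasurable) (fun j t ↦ ae_of_all _ (hrange j t)) hmean n hL.le
    _ = 2 * K / (n : ℝ) ^ β := by
      rw [Fintype.card_fin, mul_assoc, mul_exp_neg_add_one_mul_log hnpos]
      field_simp

/-- Theorem 5: when the value `m` of the optimal mean reward is known (constant over
the set `Θ` of possible mean vectors), the GCL* policy satisfies, for every `β > 0`,
`P_θ(T k n ≥ (2(β+1)+1) log n / Δ k²) ≤ 2K / n^β` for all `n ≥ 2` and `k ≠ k*`. -/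
theorem stmt14 {Ω : Type*} [MeasurableSpace Ω] (P : Measure Ω) [IsProbabilityMeasure P]
    (K : ℕ) (hK : 2 ≤ K) (β : ℝ) (hβ : 0 < β)
    (X : Fin K → ℕ → Ω → ℝ)
    (hXmeas : ∀ k s, Measurable (X k s))
    (hindep : iIndepFun
      (fun p : Fin K × ℕ => X p.1 p.2) P)
    (hident : ∀ k s, IdentDistrib (X k s) (X k 1) P P)
    (hrange : ∀ k s ω, X k s ω ∈ Set.Icc (0 : ℝ) 1)
    (μ : Fin K → ℝ) (hmean : ∀ k s, ∫ ω, X k s ω ∂P = μ k)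
    -- `μ*` is known: it takes the same value `m` for every environment in `Θ`
    (Θ : Set (Fin K → ℝ)) (m : ℝ)
    (hΘ : ∀ μ' ∈ Θ, ∀ j, μ' j ≤ m ∧ ∃ j', μ' j' = m)
    (hμΘ : μ ∈ Θ)
    (kstar : Fin K) (hkstar : μ kstar = m)
    (hbest : ∀ k, k ≠ kstar → μ k < μ kstar)
    -- empirical means
    (emp : Fin K → ℕ → Ω → ℝ)
    (hemp : ∀ k s ω, emp k s ω = (1 / (s : ℝ)) * ∑ t ∈ Finset.Icc 1 s, X k t ω)
    -- the GCL* policy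
    (I : ℕ → Ω → Fin K) (hImeas : ∀ t, Measurable (I t))
    (T : Fin K → ℕ → Ω → ℕ)
    (hT : ∀ k t ω, T k t ω = ((Finset.Icc 1 t).filter (fun s => I s ω = k)).card)
    -- each arm is pulled exactly once during the first K rounds
    (hinit : ∀ j ω, T j K ω = 1)
    -- GCL* selection rule for t > K
    (hgcl : ∀ t ω, K < t → ∀ j,
      (T (I t ω) (t - 1) ω : ℝ) *
          (max (m - emp (I t ω) (T (I t ω) (t - 1) ω) ω) 0) ^ 2 ≤
        (T j (t - 1) ω : ℝ) * (max (m - emp j (T j (t - 1) ω) ω) 0) ^ 2) :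
    ∀ n : ℕ, 2 ≤ n → ∀ k, k ≠ kstar →
      (P {ω | (2 * (β + 1) + 1) * Real.log n / (μ kstar - μ k) ^ 2 ≤ (T k n ω : ℝ)}).toReal ≤
        2 * K / (n : ℝ) ^ β :=
  stmt14_general P K β hβ X hXmeas hindep hrange μ hmean m kstar hkstar hbest emp hemp I T hT hinit
    hgcl
end

section
/- (Deterministic core of Theorem 4 / GCL-B analysis, Bernoulli case) Let each arm k have a Bernoulli reward distribution with parameter μ_k, let Θ_k be the set of environments where arm k is optimal, and d_k = inf_{θ̃ ∈ Θ_k} |μ_k − μ̃_k|. Suppose the event ξ holds: for all k and all s ∈ {1,…,n}, s(X̂_{k,s} − μ_k)² < ((β+1)/2) log n. Then for the GCL-B policy (which plays I_t ∈ argmin_k T_k(t−1)·inf_{θ̃∈Θ_k}(μ̃_k − X̂_{k,T_k(t−1)})² after one initial pull of each arm), every arm k satisfies T_k(n) ≤ 1 + 2(β+1) log(n)/d_k² (with the convention 1/0 = +∞). -/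
open Finset

/-- Deterministic core of the GCL-B analysis (Bernoulli case): on the concentration
event `ξ`, the GCL-B policy (pull each arm once, then play an arm minimizing
`T k (t-1) · inf_{θ̃ ∈ Θ_k} (μ̃ k - X̂_{k,T k (t-1)})²`) pulls every arm `k` at most
`1 + 2(β+1) log n / d k²` times by time `n`, where
`d k = inf_{θ̃ ∈ Θ_k} |μ k - μ̃ k|` (no claim when `d k = 0`, i.e. `1/0 = +∞`). -/
theorem stmt15 (K : ℕ) (hK : 2 ≤ K) (n : ℕ) (hn : K ≤ n) (β : ℝ) (hβ : 0 < β)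
    (Θ : Set (Fin K → ℝ)) (hΘ : ∀ θ' ∈ Θ, ∀ j, θ' j ∈ Set.Icc (0 : ℝ) 1)
    (μ : Fin K → ℝ) (hμ : μ ∈ Θ)  -- the true environment (Bernoulli parameters)
    (kstar : Fin K) (hbest : ∀ ℓ, μ ℓ ≤ μ kstar)  -- `kstar` is optimal in `μ`
    (d : Fin K → ℝ)
    (hd : ∀ k, d k = sInf ((fun θ' => |μ k - θ' k|) ''
      {θ' ∈ Θ | ∀ ℓ, θ' ℓ ≤ θ' k}))
    (emp : Fin K → ℕ → ℝ)  -- `emp k s` : empirical mean of arm `k` after `s` pulls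
    (I : ℕ → Fin K) (T : Fin K → ℕ → ℕ)
    (hT : ∀ k t, T k t = ((Finset.Icc 1 t).filter (fun s => I s = k)).card)
    (hinit : ∀ j, T j K = 1)
    -- GCL-B selection rule for K < t ≤ n
    (hgcl : ∀ t, K < t → t ≤ n → ∀ j,
      (T (I t) (t - 1) : ℝ) * sInf ((fun θ' => (θ' (I t) - emp (I t) (T (I t) (t - 1))) ^ 2) ''
          {θ' ∈ Θ | ∀ ℓ, θ' ℓ ≤ θ' (I t)}) ≤
        (T j (t - 1) : ℝ) * sInf ((fun θ' => (θ' j - emp j (T j (t - 1))) ^ 2) ''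
          {θ' ∈ Θ | ∀ ℓ, θ' ℓ ≤ θ' j}))
    -- the concentration event ξ holds
    (hξ : ∀ k, ∀ s ∈ Finset.Icc 1 n,
      (s : ℝ) * (emp k s - μ k) ^ 2 < ((β + 1) / 2) * Real.log n) :
    ∀ k, d k ≠ 0 →
      (T k n : ℝ) ≤ 1 + 2 * (β + 1) * Real.log n / (d k) ^ 2 := by
  intro k hdk0
  by_contra hcon
  push_neg at hcon
  set c := ((β + 1) / 2) * Real.log n with hc_def
  have hn2 : (2 : ℕ) ≤ n := le_trans hK hn
  have hlogn : 0 < Real.log n := by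
    apply Real.log_pos
    have : (2 : ℝ) ≤ (n : ℝ) := by exact_mod_cast hn2
    linarith
  have hc : 0 < c := mul_pos (by linarith) hlogn
  -- facts about d k
  have himg_ne : ((fun θ' => |μ k - θ' k|) '' {θ' ∈ Θ | ∀ ℓ, θ' ℓ ≤ θ' k}).Nonempty := by
    by_contra h
    rw [Set.not_nonempty_iff_eq_empty] at h
    exact hdk0 (by rw [hd k, h, Real.sInf_empty])
  have hSk_ne : ({θ' ∈ Θ | ∀ ℓ, θ' ℓ ≤ θ' k} : Set (Fin K → ℝ)).Nonempty := by
    obtain ⟨x, θ', hθ', _⟩ := himg_ne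
    exact ⟨θ', hθ'⟩
  have hdk_nonneg : 0 ≤ d k := by
    rw [hd k]
    apply Real.sInf_nonneg
    rintro x ⟨θ', -, rfl⟩
    exact abs_nonneg _
  have hdk : 0 < d k := lt_of_le_of_ne hdk_nonneg (Ne.symm hdk0)
  have hdle : ∀ θ' ∈ ({θ' ∈ Θ | ∀ ℓ, θ' ℓ ≤ θ' k} : Set (Fin K → ℝ)), d k ≤ |μ k - θ' k| := by
    intro θ' hθ'
    rw [hd k]
    exact csInf_le ⟨0, by rintro x ⟨θ'', -, rfl⟩; exact abs_nonneg _⟩ ⟨θ', hθ', rfl⟩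
  -- monotonicity of T
  have hTmono : ∀ j, ∀ a b : ℕ, a ≤ b → T j a ≤ T j b := by
    intro j a b hab
    rw [hT, hT]
    exact Finset.card_le_card (Finset.filter_subset_filter _
      (Finset.Icc_subset_Icc le_rfl hab))
  have hTle : ∀ j t, T j t ≤ t := by
    intro j t
    rw [hT]
    calc ((Finset.Icc 1 t).filter (fun s => I s = j)).card ≤ (Finset.Icc 1 t).card :=
          Finset.card_filter_le _ _
      _ = t := by rw [Nat.card_Icc]; omega
  have hB0 : 0 ≤ 2 * (β + 1) * Real.log n / (d k) ^ 2 := by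
    apply div_nonneg (by nlinarith) (sq_nonneg _)
  have hTkn2 : 2 ≤ T k n := by
    have h1 : (1 : ℝ) < (T k n : ℝ) := by linarith
    have : (1 : ℕ) < T k n := by exact_mod_cast h1
    omega
  -- the last pull time t
  set S := (Finset.Icc 1 n).filter (fun s => I s = k) with hS_def
  have hScard : S.card = T k n := (hT k n).symm
  have hSne : S.Nonempty := Finset.card_pos.mp (by omega)
  set t := S.max' hSne with ht_def
  have hts : t ∈ S := S.max'_mem hSne
  have htmem := hts
  rw [hS_def, Finset.mem_filter, Finset.mem_Icc] at htmem
  obtain ⟨⟨ht1, htn⟩, hIt⟩ := htmem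
  have htK : K < t := by
    by_contra h
    push_neg at h
    have hsub : S ⊆ (Finset.Icc 1 K).filter (fun s => I s = k) := by
      intro s hs
      have hsle : s ≤ t := S.le_max' s hs
      rw [hS_def, Finset.mem_filter, Finset.mem_Icc] at hs
      rw [Finset.mem_filter, Finset.mem_Icc]
      exact ⟨⟨hs.1.1, le_trans hsle h⟩, hs.2⟩
    have := Finset.card_le_card hsub
    rw [hScard, ← hT k K, hinit k] at this
    omega
  have herase : (Finset.Icc 1 (t - 1)).filter (fun s => I s = k) = S.erase t := by
    ext s
    rw [Finset.mem_filter, Finset.mem_Icc, Finset.mem_erase, hS_def,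
      Finset.mem_filter, Finset.mem_Icc]
    constructor
    · rintro ⟨⟨h1, h2⟩, h3⟩
      exact ⟨by omega, ⟨⟨h1, by omega⟩, h3⟩⟩
    · rintro ⟨hne, ⟨⟨h1, h2⟩, h3⟩⟩
      have hsle : s ≤ t := S.le_max' s (by
        rw [hS_def, Finset.mem_filter, Finset.mem_Icc]; exact ⟨⟨h1, h2⟩, h3⟩)
      exact ⟨⟨h1, by omega⟩, h3⟩
  have hTkt1 : T k (t - 1) = T k n - 1 := by
    rw [hT, herase, Finset.card_erase_of_mem hts, hScard]
  set sk := T k (t - 1) with hsk_def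
  have hsk1 : 1 ≤ sk := by omega
  have hskn : sk ≤ n := le_trans (hTle k (t - 1)) (by omega)
  have hskcast : (T k n : ℝ) = (sk : ℝ) + 1 := by
    have : T k n = sk + 1 := by omega
    rw [this]; push_cast; ring
  have hskB : 2 * (β + 1) * Real.log n / (d k) ^ 2 < (sk : ℝ) := by
    rw [hskcast] at hcon; linarith
  have hskdk : 4 * c < (sk : ℝ) * (d k) ^ 2 := by
    rw [div_lt_iff₀ (by positivity)] at hskB
    nlinarith [hskB]
  set ss := T kstar (t - 1) with hss_def
  have hss1 : 1 ≤ ss := by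
    have := hTmono kstar K (t - 1) (by omega)
    rw [hinit kstar] at this
    omega
  have hssn : ss ≤ n := le_trans (hTle kstar (t - 1)) (by omega)
  have hξk : (sk : ℝ) * (emp k sk - μ k) ^ 2 < c :=
    hξ k sk (Finset.mem_Icc.mpr ⟨hsk1, hskn⟩)
  have hξs : (ss : ℝ) * (emp kstar ss - μ kstar) ^ 2 < c :=
    hξ kstar ss (Finset.mem_Icc.mpr ⟨hss1, hssn⟩)
  have hsel := hgcl t htK htn kstar
  rw [hIt] at hsel
  rw [← hsk_def, ← hss_def] at hsel
  -- bound the RHS of the selection inequality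
  have hμmem : μ ∈ ({θ' ∈ Θ | ∀ ℓ, θ' ℓ ≤ θ' kstar} : Set (Fin K → ℝ)) := ⟨hμ, hbest⟩
  have hAstar : sInf ((fun θ' => (θ' kstar - emp kstar ss) ^ 2) ''
      {θ' ∈ Θ | ∀ ℓ, θ' ℓ ≤ θ' kstar}) ≤ (μ kstar - emp kstar ss) ^ 2 :=
    csInf_le ⟨0, by rintro x ⟨θ'', -, rfl⟩; exact sq_nonneg _⟩ ⟨μ, hμmem, rfl⟩
  have hRHS : (ss : ℝ) * sInf ((fun θ' => (θ' kstar - emp kstar ss) ^ 2) ''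
      {θ' ∈ Θ | ∀ ℓ, θ' ℓ ≤ θ' kstar}) < c := by
    have h1 : (ss : ℝ) * sInf ((fun θ' => (θ' kstar - emp kstar ss) ^ 2) ''
        {θ' ∈ Θ | ∀ ℓ, θ' ℓ ≤ θ' kstar}) ≤ (ss : ℝ) * (μ kstar - emp kstar ss) ^ 2 :=
      mul_le_mul_of_nonneg_left hAstar (by positivity)
    have h2 : (μ kstar - emp kstar ss) ^ 2 = (emp kstar ss - μ kstar) ^ 2 := by ring
    rw [h2] at h1
    linarith
  -- bound the LHS of the selection inequality
  set e := |emp k sk - μ k| with he_def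
  have he0 : 0 ≤ e := abs_nonneg _
  have hske : (sk : ℝ) * e ^ 2 < c := by
    rw [he_def, sq_abs]; exact hξk
  have hsk0 : (0 : ℝ) < (sk : ℝ) := by exact_mod_cast hsk1
  have he_half : e < d k / 2 := by
    by_contra h
    push_neg at h
    have h1 : (d k / 2) ^ 2 ≤ e ^ 2 := pow_le_pow_left₀ (by positivity) h 2
    have h2 := mul_le_mul_of_nonneg_left h1 hsk0.le
    have h3 : (sk : ℝ) * (d k / 2) ^ 2 = (sk : ℝ) * (d k) ^ 2 / 4 := by ring
    linarith
  have hAk : (d k / 2) ^ 2 ≤ sInf ((fun θ' => (θ' k - emp k sk) ^ 2) ''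
      {θ' ∈ Θ | ∀ ℓ, θ' ℓ ≤ θ' k}) := by
    apply le_csInf (hSk_ne.image _)
    rintro x ⟨θ', hθ', rfl⟩
    have h1 : d k ≤ |μ k - θ' k| := hdle θ' hθ'
    have h2 : |μ k - θ' k| ≤ e + |θ' k - emp k sk| := by
      rw [he_def]
      calc |μ k - θ' k| = |(μ k - emp k sk) + (emp k sk - θ' k)| := by ring_nf
        _ ≤ |μ k - emp k sk| + |emp k sk - θ' k| := abs_add_le _ _
        _ = |emp k sk - μ k| + |θ' k - emp k sk| := by
              rw [abs_sub_comm (μ k) (emp k sk), abs_sub_comm (emp k sk) (θ' k)]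
    have h3 : d k / 2 ≤ |θ' k - emp k sk| := by linarith
    calc (d k / 2) ^ 2 ≤ |θ' k - emp k sk| ^ 2 := by nlinarith [abs_nonneg (θ' k - emp k sk)]
      _ = (θ' k - emp k sk) ^ 2 := sq_abs _
  have hLHS : c < (sk : ℝ) * sInf ((fun θ' => (θ' k - emp k sk) ^ 2) ''
      {θ' ∈ Θ | ∀ ℓ, θ' ℓ ≤ θ' k}) := by
    have h1 : (sk : ℝ) * (d k / 2) ^ 2 ≤ (sk : ℝ) * sInf ((fun θ' => (θ' k - emp k sk) ^ 2) ''
        {θ' ∈ Θ | ∀ ℓ, θ' ℓ ≤ θ' k}) := mul_le_mul_of_nonneg_left hAk hsk0.le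
    have h2 : (sk : ℝ) * (d k / 2) ^ 2 = (sk : ℝ) * (d k) ^ 2 / 4 := by ring
    linarith
  linarith
end
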